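/- arXiv:1609.08821 — 4 statements merged into one kernel-verified Lean document; each statement's English description precedes it below -/
import Mathlib

section
/- Let H be a Hilbert space, M ⊆ M_prior ⊆ H, W a closed subspace, and for h ∈ H let H_h = h + W^⊥. Say a set M̃ is feasible if M̃ ⊆ M_prior and the set of tuples of measurements {(⟨w_j, h⟩)_{j=1}^m : h ∈ M̃} equals {(⟨w_j, h⟩)_{j=1}^m : h ∈ M}, where {w_j} is an orthonormal basis of W. Then M_post = M_prior ∩ (⋃_{h∈M} H_h) is feasible and every feasible set M̃ satisfies M̃ ⊆ M_post. -/
open scoped RealInnerProductSpace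

/-- `M_post = M_prior ∩ ⋃_{h∈M} (h + Wᗮ)` is feasible (it is contained in the prior and
reproduces exactly the same measurements as `M`), and every feasible set is contained in it. -/
theorem stmt2 {H : Type*} [NormedAddCommGroup H] [InnerProductSpace ℝ H] [CompleteSpace H]
    {m : ℕ} (w : Fin m → H) (hw : Orthonormal ℝ w)
    (M Mprior : Set H) (hM : M ⊆ Mprior) :
    let W : Submodule ℝ H := Submodule.span ℝ (Set.range w)
    let Mpost : Set H := Mprior ∩ ⋃ h ∈ M, {h' : H | ∃ z ∈ Wᗮ, h' = h + z}
    let meas : Set H → Set (Fin m → ℝ) := fun X => (fun h j => ⟪w j, h⟫) '' X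
    let Feasible : Set H → Prop := fun X => X ⊆ Mprior ∧ meas X = meas M
    Feasible Mpost ∧ ∀ X : Set H, Feasible X → X ⊆ Mpost := by
  intro W Mpost meas Feasible
  -- z ∈ Wᗮ gives zero inner with each w j
  have hwW : ∀ j, w j ∈ W := fun j => Submodule.subset_span ⟨j, rfl⟩
  have hzero : ∀ z ∈ Wᗮ, ∀ j, ⟪w j, z⟫ = 0 := by
    intro z hz j
    exact (Submodule.mem_orthogonal W z).1 hz (w j) (hwW j)
  have key : ∀ x h : H, (∀ j, ⟪w j, x⟫ = ⟪w j, h⟫) → x - h ∈ Wᗮ := by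
    intro x h hxh
    rw [Submodule.mem_orthogonal]
    intro u hu
    induction hu using Submodule.span_induction with
    | mem u hu => obtain ⟨j, rfl⟩ := hu; simp [inner_sub_right, hxh j]
    | zero => simp
    | add u v _ _ hu hv => rw [inner_add_left, hu, hv, add_zero]
    | smul c u _ hu => rw [inner_smul_left, hu]; simp
  have hmeas : meas Mpost = meas M := by
    apply Set.Subset.antisymm
    · rintro p ⟨x, ⟨hxp, hxU⟩, rfl⟩
      simp only [Set.mem_iUnion] at hxU
      obtain ⟨h, hhM, z, hz, rfl⟩ := hxU
      refine ⟨h, hhM, ?_⟩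
      funext j
      simp [inner_add_right, hzero z hz j]
    · rintro p ⟨h, hhM, rfl⟩
      refine ⟨h, ⟨hM hhM, ?_⟩, rfl⟩
      simp only [Set.mem_iUnion]
      exact ⟨h, hhM, 0, Wᗮ.zero_mem, by simp⟩
  refine ⟨⟨Set.inter_subset_left, hmeas⟩, ?_⟩
  rintro X ⟨hXp, hXm⟩ x hx
  have : (fun j => ⟪w j, x⟫) ∈ meas M := by
    rw [← hXm]; exact ⟨x, hx, rfl⟩
  obtain ⟨h, hhM, heq⟩ := this
  refine ⟨hXp hx, ?_⟩
  simp only [Set.mem_iUnion]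
  refine ⟨h, hhM, x - h, key x h ?_, by abel⟩
  intro j
  exact (congrFun heq j).symm
end

section
/- Let X and Y be closed subspaces of a Hilbert space H, and let P_Y denote orthogonal projection onto Y. Then Y decomposes as the orthogonal direct sum Y = closure(P_Y(X)) ⊕ (Y ∩ X^⊥), i.e. the two summands are orthogonal and their sum is dense in Y (equality when Y is finite dimensional). -/
/-!
Since `P_Y` is self-adjoint and fixes `Y`, a vector of `Y` is orthogonal to `P_Y(X)` exactly when
it is orthogonal to `X`, so `Y ⊓ Xᗮ = Y ⊓ Aᗮ` for `A = P_Y(X) ≤ Y`. The theorem is then the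
decomposition `Y = closure A ⊕ (Y ⊓ Aᗮ)` of a closed subspace relative to any of its subspaces,
together with `(closure A)ᗮ = Aᗮ`.
-/

open scoped RealInnerProductSpace

namespace Submodule

variable {𝕜 E : Type*} [RCLike 𝕜] [NormedAddCommGroup E] [InnerProductSpace 𝕜 E]

theorem orthogonal_topologicalClosure [CompleteSpace E] (K : Submodule 𝕜 E) :
    K.topologicalClosureᗮ = Kᗮ := by
  rw [← orthogonal_orthogonal_eq_closure, triorthogonal_eq_orthogonal]

theorem topologicalClosure_sup_inf_orthogonal [CompleteSpace E] {A Y : Submodule 𝕜 E}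
    (hAY : A ≤ Y) (hY : IsClosed (Y : Set E)) : (A ⊔ Y ⊓ Aᗮ).topologicalClosure = Y := by
  refine le_antisymm (topologicalClosure_minimal _ (sup_le hAY inf_le_left) hY) ?_
  have hclosure : A.topologicalClosure ≤ Y := topologicalClosure_minimal _ hAY hY
  calc Y = A.topologicalClosure ⊔ A.topologicalClosureᗮ ⊓ Y :=
        (sup_orthogonal_inf_of_hasOrthogonalProjection hclosure).symm
    _ ≤ (A ⊔ Y ⊓ Aᗮ).topologicalClosure := by
        rw [orthogonal_topologicalClosure, inf_comm]
        exact sup_le (topologicalClosure_mono le_sup_left)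
          (le_sup_right.trans (le_topologicalClosure _))

theorem inf_orthogonal_map_starProjection (X Y : Submodule 𝕜 E) [Y.HasOrthogonalProjection] :
    Y ⊓ (X.map (Y.starProjection : E →ₗ[𝕜] E))ᗮ = Y ⊓ Xᗮ := by
  ext y
  simp only [mem_inf, and_congr_right_iff]
  intro hy
  simp only [mem_orthogonal, mem_map, forall_exists_index, and_imp, forall_apply_eq_imp_iff₂,
    ContinuousLinearMap.coe_coe, inner_starProjection_left_eq_right,
    starProjection_eq_self_iff.mpr hy]

end Submodule

theorem stmt5_general {H : Type*} [NormedAddCommGroup H] [InnerProductSpace ℝ H] [CompleteSpace H]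
    (X Y : Submodule ℝ H) [CompleteSpace Y] :
    let P : H →ₗ[ℝ] H := (Y.subtypeL.comp Y.orthogonalProjectionOnto).toLinearMap
    let A : Submodule ℝ H := X.map P
    (∀ a ∈ A.topologicalClosure, ∀ b ∈ Y ⊓ Xᗮ, ⟪a, b⟫ = 0) ∧
      (A ⊔ (Y ⊓ Xᗮ)).topologicalClosure = Y := by
  intro P A
  have hA : Y ⊓ Aᗮ = Y ⊓ Xᗮ := X.inf_orthogonal_map_starProjection Y
  refine ⟨fun a ha b hb => ?_, ?_⟩
  · rw [← Submodule.orthogonal_orthogonal_eq_closure] at ha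
    exact Submodule.inner_left_of_mem_orthogonal (hA ▸ hb).2 ha
  · have hAY : A ≤ Y :=
      Submodule.map_le_iff_le_comap.mpr fun x _ => (Y.orthogonalProjectionOnto x).2
    have hY : IsClosed (Y : Set H) := (completeSpace_coe_iff_isComplete.mp ‹_›).isClosed
    rw [← hA]
    exact Submodule.topologicalClosure_sup_inf_orthogonal hAY hY

/-- For closed subspaces `X`, `Y` of a Hilbert space, `Y` decomposes as the orthogonal direct
sum `Y = closure (P_Y(X)) ⊕ (Y ∩ Xᗮ)`: the two summands are orthogonal and their sum is
dense in `Y`. -/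
theorem stmt5 {H : Type*} [NormedAddCommGroup H] [InnerProductSpace ℝ H] [CompleteSpace H]
    (X Y : Submodule ℝ H) [CompleteSpace X] [CompleteSpace Y] :
    let P : H →ₗ[ℝ] H := (Y.subtypeL.comp Y.orthogonalProjectionOnto).toLinearMap
    let A : Submodule ℝ H := X.map P
    (∀ a ∈ A.topologicalClosure, ∀ b ∈ Y ⊓ Xᗮ, ⟪a, b⟫ = 0) ∧
      (A ⊔ (Y ⊓ Xᗮ)).topologicalClosure = Y :=
  stmt5_general X Y
end

section
/- Let H be a Hilbert space, V a finite-dimensional subspace of H and W a finite-dimensional subspace of H. Then H decomposes as the orthogonal direct sum of four mutually orthogonal subspaces: P_W(V), W ∩ V^⊥, P_{W^⊥}(V), and W^⊥ ∩ V^⊥, where P_W and P_{W^⊥} denote orthogonal projections onto W and W^⊥ (with closures taken where needed in infinite dimension). -/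
open scoped RealInnerProductSpace

/-!
Let `P` be the orthogonal projection onto `W`, so that `1 - P` is the projection onto `Wᗮ`.
Since `P` is self-adjoint, a vector of `W` is orthogonal to `P(V)` exactly when it is
orthogonal to `V`; hence `W` splits orthogonally as `P(V) ⊕ (W ⊓ Vᗮ)`, the first summand
being finite-dimensional. The same argument applied to `Wᗮ` splits it as
`(1 - P)(V) ⊕ (Wᗮ ⊓ Vᗮ)`, and `H = W ⊕ Wᗮ`.
-/

namespace Submodule

variable {𝕜 E : Type*} [RCLike 𝕜] [NormedAddCommGroup E] [InnerProductSpace 𝕜 E]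
  (K V : Submodule 𝕜 E) [K.HasOrthogonalProjection]

theorem map_starProjection_le : V.map (K.starProjection : E →ₗ[𝕜] E) ≤ K := by
  rintro _ ⟨v, -, rfl⟩
  exact K.starProjection_apply_mem v

theorem inf_orthogonal_map_starProjection_s6 :
    K ⊓ (V.map (K.starProjection : E →ₗ[𝕜] E))ᗮ = K ⊓ Vᗮ := by
  ext x
  simp only [mem_inf, and_congr_right_iff, mem_orthogonal, mem_map, forall_exists_index,
    and_imp, forall_apply_eq_imp_iff₂, ContinuousLinearMap.coe_coe]
  intro hx
  simp only [inner_starProjection_left_eq_right, (K.starProjection_eq_self_iff).2 hx]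

theorem map_starProjection_sup_inf_orthogonal [FiniteDimensional 𝕜 V] :
    V.map (K.starProjection : E →ₗ[𝕜] E) ⊔ K ⊓ Vᗮ = K := by
  rw [← inf_orthogonal_map_starProjection_s6, inf_comm]
  exact sup_orthogonal_inf_of_hasOrthogonalProjection (map_starProjection_le K V)

end Submodule

open Submodule

theorem stmt6_general {H : Type*} [NormedAddCommGroup H] [InnerProductSpace ℝ H]
    (V W : Submodule ℝ H) [FiniteDimensional ℝ V] [FiniteDimensional ℝ W] :
    let PW : H →ₗ[ℝ] H := (W.subtypeL.comp W.orthogonalProjectionOnto).toLinearMap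
    let A : Submodule ℝ H := V.map PW
    let B : Submodule ℝ H := W ⊓ Vᗮ
    let C : Submodule ℝ H := V.map (LinearMap.id - PW)
    let D : Submodule ℝ H := Wᗮ ⊓ Vᗮ
    (∀ a ∈ A, ∀ b ∈ B, ⟪a, b⟫ = 0) ∧
    (∀ a ∈ A, ∀ c ∈ C, ⟪a, c⟫ = 0) ∧
    (∀ a ∈ A, ∀ d ∈ D, ⟪a, d⟫ = 0) ∧
    (∀ b ∈ B, ∀ c ∈ C, ⟪b, c⟫ = 0) ∧
    (∀ b ∈ B, ∀ d ∈ D, ⟪b, d⟫ = 0) ∧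
    (∀ c ∈ C, ∀ d ∈ D, ⟪c, d⟫ = 0) ∧
    (A ⊔ B ⊔ C ⊔ D).topologicalClosure = ⊤ := by
  intro PW A B C D
  have hC : C = V.map (Wᗮ.starProjection : H →ₗ[ℝ] H) := by
    rw [starProjection_orthogonal]; rfl
  have hAW : A ≤ W := map_starProjection_le W V
  have hCW : C ≤ Wᗮ := hC ▸ map_starProjection_le Wᗮ V
  have hBA : B ≤ Aᗮ := (inf_orthogonal_map_starProjection_s6 W V).ge.trans inf_le_right
  have hDC : D ≤ Cᗮ := hC ▸ (inf_orthogonal_map_starProjection_s6 Wᗮ V).ge.trans inf_le_right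
  have hWW : W ⟂ Wᗮ := isOrtho_orthogonal_right W
  simp only [← isOrtho_iff_inner_eq]
  refine ⟨(isOrtho_iff_le.2 hBA).symm, hWW.mono hAW hCW, hWW.mono hAW inf_le_left,
    hWW.mono inf_le_left hCW, hWW.mono inf_le_left inf_le_left, (isOrtho_iff_le.2 hDC).symm, ?_⟩
  have hAB : A ⊔ B = W := map_starProjection_sup_inf_orthogonal W V
  have hCD : C ⊔ D = Wᗮ := hC ▸ map_starProjection_sup_inf_orthogonal Wᗮ V
  rw [sup_assoc, hAB, hCD, sup_orthogonal_of_hasOrthogonalProjection]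
  exact top_unique (le_topologicalClosure _)

/-- For finite-dimensional subspaces `V`, `W` of a Hilbert space `H`, the space `H`
decomposes as the orthogonal direct sum of the four mutually orthogonal subspaces
`P_W(V)`, `W ⊓ Vᗮ`, `P_{Wᗮ}(V)` and `Wᗮ ⊓ Vᗮ`. -/
theorem stmt6 {H : Type*} [NormedAddCommGroup H] [InnerProductSpace ℝ H] [CompleteSpace H]
    (V W : Submodule ℝ H) [FiniteDimensional ℝ V] [FiniteDimensional ℝ W] :
    let PW : H →ₗ[ℝ] H := (W.subtypeL.comp W.orthogonalProjectionOnto).toLinearMap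
    let A : Submodule ℝ H := V.map PW
    let B : Submodule ℝ H := W ⊓ Vᗮ
    let C : Submodule ℝ H := V.map (LinearMap.id - PW)
    let D : Submodule ℝ H := Wᗮ ⊓ Vᗮ
    (∀ a ∈ A, ∀ b ∈ B, ⟪a, b⟫ = 0) ∧
    (∀ a ∈ A, ∀ c ∈ C, ⟪a, c⟫ = 0) ∧
    (∀ a ∈ A, ∀ d ∈ D, ⟪a, d⟫ = 0) ∧
    (∀ b ∈ B, ∀ c ∈ C, ⟪b, c⟫ = 0) ∧
    (∀ b ∈ B, ∀ d ∈ D, ⟪b, d⟫ = 0) ∧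
    (∀ c ∈ C, ∀ d ∈ D, ⟪c, d⟫ = 0) ∧
    (A ⊔ B ⊔ C ⊔ D).topologicalClosure = ⊤ :=
  stmt6_general V W
end

section
/- With the SVD-aligned bases as above (⟨w_i*, v_j*⟩ = σ_j δ_{ij}, p = #{j : σ_j = 1}, q = #{j : σ_j > 0}), the family {(1−σ_j²)^{−1/2}(v_j* − σ_j w_j*)}_{j=p+1}^{q} ∪ {v_j*}_{j=q+1}^{n} is an orthonormal basis of P_{W^⊥}(V), the orthogonal projection of V onto W^⊥. -/
open scoped RealInnerProductSpace

/-!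
With `r j = v j - P_W (v j)`, the cross relations give `⟪r a, r b⟫ = δ_ab (1 - σ_a²)`. Hence `r j`
vanishes exactly when `σ j = 1`, while for `j ≥ p` the rescaled residuals `(1 - σ_j²)^{-1/2} r j`
are orthonormal; they are the `g j` of the statement (for `j ≥ q`, `σ j = 0` and `r j = v j`), and
they span the image of `V` because the discarded `r j` are zero.
-/

section Projection

variable {H : Type*} [NormedAddCommGroup H] [InnerProductSpace ℝ H] {m : ℕ}

noncomputable def orthProj (w : Fin m → H) : H →L[ℝ] H :=
  ∑ i : Fin m, (innerSL ℝ (w i)).smulRight (w i)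

theorem orthProj_apply (w : Fin m → H) (x : H) : orthProj w x = ∑ i, ⟪w i, x⟫ • w i := by
  simp [orthProj]

theorem Orthonormal.inner_sub_orthProj {w : Fin m → H} (hw : Orthonormal ℝ w) (x y : H) :
    ⟪x - orthProj w x, y - orthProj w y⟫ = ⟪x, y⟫ - ∑ i, ⟪w i, x⟫ * ⟪w i, y⟫ := by
  have hx : ⟪orthProj w x, y⟫ = ∑ i, ⟪w i, x⟫ * ⟪w i, y⟫ := by
    simp only [orthProj_apply, sum_inner, real_inner_smul_left]
  have hy : ⟪x, orthProj w y⟫ = ∑ i, ⟪w i, x⟫ * ⟪w i, y⟫ := by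
    simp only [orthProj_apply, inner_sum, real_inner_smul_right, real_inner_comm x, mul_comm]
  have hxy : ⟪orthProj w x, orthProj w y⟫ = ∑ i, ⟪w i, x⟫ * ⟪w i, y⟫ := by
    simpa only [orthProj_apply, conj_trivial] using
      hw.inner_sum (fun i => ⟪w i, x⟫) (fun i => ⟪w i, y⟫) _
  rw [inner_sub_left, inner_sub_right, inner_sub_right, hx, hy, hxy]
  ring

end Projection

theorem Submodule.span_range_subtype_smul_eq {K M ι : Type*} [Field K] [AddCommGroup M]
    [Module K M] (r : ι → M) (c : ι → K) {P : ι → Prop} (hc : ∀ i, P i → c i ≠ 0)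
    (hr : ∀ i, ¬ P i → r i = 0) :
    Submodule.span K (Set.range fun i : {i // P i} => c i • r i) =
      Submodule.span K (Set.range r) := by
  apply le_antisymm <;> rw [Submodule.span_le] <;> rintro _ ⟨i, rfl⟩
  · exact Submodule.smul_mem _ _ (Submodule.subset_span ⟨i, rfl⟩)
  · by_cases hi : P i
    · rw [← inv_smul_smul₀ (hc i hi) (r i)]
      exact Submodule.smul_mem _ _ (Submodule.subset_span ⟨⟨i, hi⟩, rfl⟩)
    · rw [hr i hi]
      exact Submodule.zero_mem _

theorem orthonormal_inv_sqrt_smul {H ι : Type*} [NormedAddCommGroup H] [InnerProductSpace ℝ H]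
    [DecidableEq ι] (r : ι → H) (c : ι → ℝ) (hc : ∀ i, 0 < c i)
    (hr : ∀ i j, ⟪r i, r j⟫ = if i = j then c i else 0) :
    Orthonormal ℝ fun i => (√(c i))⁻¹ • r i := by
  rw [orthonormal_iff_ite]
  intro i j
  rw [real_inner_smul_left, real_inner_smul_right, hr]
  split_ifs with hij
  · subst hij
    have hsqrt : 0 < √(c i) := Real.sqrt_pos.2 (hc i)
    field_simp
    rw [Real.sq_sqrt (hc i).le]
  · simp

section SVD

variable {H : Type*} [NormedAddCommGroup H] [InnerProductSpace ℝ H] {m n : ℕ}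
  {v : Fin n → H} {w : Fin m → H} {σ : ℕ → ℝ}
  (hcross : ∀ (i : Fin m) (j : Fin n), ⟪w i, v j⟫ = if (i : ℕ) = (j : ℕ) then σ (j : ℕ) else 0)
include hcross

theorem orthProj_apply_of_lt (j : Fin n) (hj : (j : ℕ) < m) :
    orthProj w (v j) = σ j • w ⟨j, hj⟩ := by
  rw [orthProj_apply, Finset.sum_eq_single ⟨j, hj⟩]
  · simp [hcross]
  · intro i _ hi
    rw [hcross, if_neg (fun h => hi (Fin.ext h)), zero_smul]
  · simp

theorem orthProj_apply_eq_zero (j : Fin n) (hj : σ j = 0) : orthProj w (v j) = 0 := by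
  simp [orthProj_apply, hcross, hj]

theorem sum_inner_mul_inner (hσm : ∀ j, m ≤ j → σ j = 0) (a b : Fin n) :
    ∑ i, ⟪w i, v a⟫ * ⟪w i, v b⟫ = if a = b then σ a ^ 2 else 0 := by
  simp only [hcross]
  split_ifs with hab
  · subst hab
    by_cases ha : (a : ℕ) < m
    · rw [Finset.sum_eq_single ⟨a, ha⟩]
      · simp [sq]
      · intro i _ hi
        simp [show (i : ℕ) ≠ a from fun h => hi (Fin.ext h)]
      · simp
    · simp [hσm a (not_lt.1 ha)]
  · refine Finset.sum_eq_zero fun i _ => ?_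
    split_ifs with ha hb
    · exact absurd (Fin.ext (ha.symm.trans hb)) hab
    all_goals simp

theorem inner_sub_orthProj_sub_orthProj (hw : Orthonormal ℝ w) (hv : Orthonormal ℝ v)
    (hσm : ∀ j, m ≤ j → σ j = 0) (a b : Fin n) :
    ⟪v a - orthProj w (v a), v b - orthProj w (v b)⟫ = if a = b then 1 - σ a ^ 2 else 0 := by
  rw [hw.inner_sub_orthProj, sum_inner_mul_inner hcross hσm, orthonormal_iff_ite.1 hv]
  split_ifs <;> ring

end SVD

theorem stmt10_general {H : Type*} [NormedAddCommGroup H] [InnerProductSpace ℝ H]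
    {m n p q : ℕ} (v : Fin n → H) (w : Fin m → H)
    (hv : Orthonormal ℝ v) (hw : Orthonormal ℝ w) (σ : ℕ → ℝ)
    (hcross : ∀ (i : Fin m) (j : Fin n), ⟪w i, v j⟫ = if (i : ℕ) = (j : ℕ) then σ (j : ℕ) else 0)
    (hσ01 : ∀ j, 0 ≤ σ j ∧ σ j ≤ 1)
    (hp : ∀ j < p, σ j = 1) (hp' : ∀ j, p ≤ j → σ j ≠ 1)
    (hq' : ∀ j, q ≤ j → σ j = 0)
    (hqm : q ≤ m) :
    let PW : H →L[ℝ] H := ∑ i : Fin m, (innerSL ℝ (w i)).smulRight (w i)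
    let g : {j : Fin n // p ≤ (j : ℕ)} → H := fun j =>
      if hj : ((j : Fin n) : ℕ) < q then
        (Real.sqrt (1 - σ ((j : Fin n) : ℕ) ^ 2))⁻¹ •
          (v j - σ ((j : Fin n) : ℕ) • w ⟨((j : Fin n) : ℕ), lt_of_lt_of_le hj hqm⟩)
      else v j
    Orthonormal ℝ g ∧
      Submodule.span ℝ (Set.range g)
        = (Submodule.span ℝ (Set.range v)).map (LinearMap.id - PW.toLinearMap) := by
  intro PW g
  set r : Fin n → H := fun j => v j - orthProj w (v j)
  set c : Fin n → ℝ := fun j => 1 - σ j ^ 2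
  have hr : ∀ a b, ⟪r a, r b⟫ = if a = b then c a else 0 :=
    inner_sub_orthProj_sub_orthProj hcross hw hv fun j hj => hq' j (hqm.trans hj)
  have hc : ∀ j : Fin n, p ≤ j → 0 < c j := fun j hj => by
    have hσ1 : σ j < 1 := lt_of_le_of_ne (hσ01 j).2 (hp' j hj)
    nlinarith [(hσ01 j).1]
  have hg : g = fun j : {j : Fin n // p ≤ (j : ℕ)} => (√(c j))⁻¹ • r j := by
    funext j
    by_cases hj : (j : ℕ) < q
    · simp [g, r, c, hj, orthProj_apply_of_lt hcross _ (hj.trans_le hqm)]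
    · simp [g, r, c, hj, hq' _ (not_lt.1 hj), orthProj_apply_eq_zero hcross]
  refine ⟨?_, ?_⟩
  · rw [hg]
    exact orthonormal_inv_sqrt_smul (r ∘ Subtype.val) (c ∘ Subtype.val) (fun j => hc j j.2)
      fun i j => by simp [hr, Subtype.ext_iff]
  · have hr_eq : ⇑((LinearMap.id : H →ₗ[ℝ] H) - PW.toLinearMap) ∘ v = r := rfl
    rw [Submodule.map_span, ← Set.range_comp, hr_eq, hg]
    refine Submodule.span_range_subtype_smul_eq r (fun j => (√(c j))⁻¹)
      (P := fun j : Fin n => p ≤ (j : ℕ)) (fun j hj => (inv_pos.2 (Real.sqrt_pos.2 (hc j hj))).ne')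
      fun j hj => ?_
    rw [← inner_self_eq_zero (𝕜 := ℝ), hr, if_pos rfl]
    simp [c, hp j (not_le.1 hj)]

/-- With SVD-aligned bases, the family `{(1-σ_j²)^{-1/2}(v_j - σ_j w_j)}_{p < j ≤ q} ∪
{v_j}_{q < j ≤ n}` is an orthonormal basis of `P_{Wᗮ}(V)`, the orthogonal projection of `V`
onto `Wᗮ`. -/
theorem stmt10 {H : Type*} [NormedAddCommGroup H] [InnerProductSpace ℝ H] [CompleteSpace H]
    {m n p q : ℕ} (v : Fin n → H) (w : Fin m → H)
    (hv : Orthonormal ℝ v) (hw : Orthonormal ℝ w) (σ : ℕ → ℝ)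
    (hcross : ∀ (i : Fin m) (j : Fin n), ⟪w i, v j⟫ = if (i : ℕ) = (j : ℕ) then σ (j : ℕ) else 0)
    (hσanti : ∀ i j : ℕ, i ≤ j → σ j ≤ σ i) (hσ01 : ∀ j, 0 ≤ σ j ∧ σ j ≤ 1)
    (hp : ∀ j < p, σ j = 1) (hp' : ∀ j, p ≤ j → σ j ≠ 1)
    (hq : ∀ j < q, 0 < σ j) (hq' : ∀ j, q ≤ j → σ j = 0)
    (hqm : q ≤ m) (hqn : q ≤ n) :
    let PW : H →L[ℝ] H := ∑ i : Fin m, (innerSL ℝ (w i)).smulRight (w i)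
    let g : {j : Fin n // p ≤ (j : ℕ)} → H := fun j =>
      if hj : ((j : Fin n) : ℕ) < q then
        (Real.sqrt (1 - σ ((j : Fin n) : ℕ) ^ 2))⁻¹ •
          (v j - σ ((j : Fin n) : ℕ) • w ⟨((j : Fin n) : ℕ), lt_of_lt_of_le hj hqm⟩)
      else v j
    Orthonormal ℝ g ∧
      Submodule.span ℝ (Set.range g)
        = (Submodule.span ℝ (Set.range v)).map (LinearMap.id - PW.toLinearMap) :=
  stmt10_general v w hv hw σ hcross hσ01 hp hp' hq' hqm
end
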